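/- Let r ≥ 2 and n = r + 1. Then H_D is invertible over ℚ, its entries are constant along diagonals (i.e., (H_D⁻¹)_{ab} = (H_D⁻¹)_{a+c,b+c} for all admissible c ∈ ℤ, with a, b ∈ {1,…,r(r+1)}), and its r×r blocks satisfy: (H_D⁻¹)_{αα} = T_rᵗ − T_r for every α; (H_D⁻¹)_{αβ} = T_r^(β−α) − T_r^(β−α+1) + (T_rᵗ)^(r−β+α+1) − (T_rᵗ)^(r−β+α) for 1 ≤ α < β ≤ n; and (H_D⁻¹)_{αβ} = −((H_D⁻¹)_{βα})ᵗ for α > β. -/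

import Mathlib

/-! Let `n = r + 1` and index the rows and columns of `H_D` by `a = α r + j`. The inverse is the
Toeplitz matrix `K_{ab} = f (b - a)` with `f d = h d - h (d - 1)`, where `h d = [n ∣ d]` for
`d ≥ 0` and `h d = [n ∣ d + 1]` for `d < 0`. Row `(α, j)` of `H_D` is `+1` on the first `j + 1`
columns of each later block and `-1` on the last `r - j` columns of each earlier block, so the
contribution of each block to `(H_D K)_{ac}` telescopes to two values of `h`. The remaining sums
run over progressions of step `r ≡ -1 (mod n)`, which meet each residue class at most once, and
they add up to `[a = c]`. Finally `h (-1 - d) = h d` makes `f` odd, and on the blocks `f`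
reproduces the powers of `T_r`. -/

open Matrix Finset

theorem Int.dvd_iff_of_abs_lt_two_mul {n z : ℤ} (hn : 0 < n) (hz : |z| < 2 * n) :
    n ∣ z ↔ z = 0 ∨ z = n ∨ z = -n := by
  constructor
  · rintro ⟨q, rfl⟩
    obtain ⟨hlo, hhi⟩ := abs_lt.mp hz
    have hq : -2 < q := by nlinarith
    have hq' : q < 2 := by nlinarith
    interval_cases q <;> simp
  · rintro (rfl | rfl | rfl)
    exacts [dvd_zero n, dvd_rfl, Int.dvd_neg.mpr dvd_rfl]

theorem sum_Ico_ite_sub_eq {M : Type*} [AddCommMonoid M] (s e : ℕ) (γ t : ℤ) (x : M) :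
    ∑ β ∈ Ico s e, (if γ - β = t then x else 0) =
      if (s : ℤ) ≤ γ - t ∧ γ - t < e then x else 0 := by
  by_cases h : (s : ℤ) ≤ γ - t ∧ γ - t < e
  · rw [if_pos h, sum_eq_single_of_mem (γ - t).toNat (mem_Ico.mpr ⟨by omega, by omega⟩)]
    · rw [if_pos (by omega)]
    · intro b _ hb
      rw [if_neg (by omega)]
  · rw [if_neg h]
    refine sum_eq_zero fun b hb => if_neg ?_
    rw [mem_Ico] at hb
    omega

theorem Fin.sum_ite_eq_sum_Ico {M : Type*} [AddCommMonoid M] {m : ℕ} (p : Fin m → Prop)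
    [DecidablePred p] (φ : ℕ → M) {s e : ℕ} (he : e ≤ m)
    (hp : ∀ k : Fin m, p k ↔ s ≤ k ∧ (k : ℕ) < e) :
    ∑ k, (if p k then φ k else 0) = ∑ k ∈ Ico s e, φ k := by
  rw [← sum_filter]
  refine (sum_map _ Fin.valEmbedding φ).symm.trans (congrArg (Finset.sum · φ) ?_)
  ext k
  simp only [mem_map, mem_filter, mem_univ, true_and, hp, Fin.valEmbedding_apply, mem_Ico]
  constructor
  · rintro ⟨k, hk, rfl⟩
    exact hk
  · intro hk
    exact ⟨⟨k, by omega⟩, hk, rfl⟩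

theorem Matrix.pow_apply_of_apply_eq_ite_succ {R : Type*} [Semiring R] {m : ℕ}
    (T : Matrix (Fin m) (Fin m) R) (hT : ∀ i j : Fin m, T i j = if (i : ℕ) + 1 = j then 1 else 0)
    (e : ℕ) (i j : Fin m) : (T ^ e) i j = if (i : ℕ) + e = j then 1 else 0 := by
  induction e generalizing j with
  | zero => simp [one_apply, Fin.ext_iff]
  | succ e ih =>
    simp only [pow_succ, mul_apply, ih, hT, ite_mul, one_mul, zero_mul]
    by_cases h : (i : ℕ) + e < m
    · rw [sum_eq_single ⟨(i : ℕ) + e, h⟩ (fun t _ ht => if_neg fun h' => ht (Fin.ext h'.symm))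
        (by simp)]
      simp only [if_true, add_assoc]
    · rw [sum_eq_zero fun t _ => if_neg (by omega), if_neg (by omega)]

namespace DipperDonkin

section Coefficients

variable (r : ℕ)

def potential (d : ℤ) : ℚ :=
  if 0 ≤ d then (if (r + 1 : ℤ) ∣ d then 1 else 0) else (if (r + 1 : ℤ) ∣ d + 1 then 1 else 0)

def coeff (d : ℤ) : ℚ := potential r d - potential r (d - 1)

theorem potential_neg_sub_one (d : ℤ) : potential r (-1 - d) = potential r d := by
  unfold potential
  by_cases hd : 0 ≤ d
  · rw [if_neg (by omega), if_pos hd, show -1 - d + 1 = -d by ring]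
    simp only [Int.dvd_neg]
  · rw [if_pos (by omega), if_neg hd, show -1 - d = -(d + 1) by ring]
    simp only [Int.dvd_neg]

theorem coeff_neg (d : ℤ) : coeff r (-d) = -coeff r d := by
  unfold coeff
  rw [← potential_neg_sub_one r (-d), ← potential_neg_sub_one r (-d - 1)]
  ring_nf

theorem sum_Ico_coeff (x : ℤ) {s e : ℕ} (h : s ≤ e) :
    ∑ k ∈ Ico s e, coeff r (x - k) = potential r (x - s) - potential r (x - e) := by
  rw [← neg_sub, ← sum_Ico_sub (fun k : ℕ => potential r (x - k)) h, ← sum_neg_distrib]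
  refine sum_congr rfl fun k _ => ?_
  rw [coeff, neg_sub, Nat.cast_succ, sub_add_eq_sub_sub]

variable {r}

/-- Since `D r + δ = D (r + 1) + (δ - D)`, divisibility by `r + 1` only depends on `δ - D`. -/
theorem potential_mul_add {D δ : ℤ} (hD : -r ≤ D) (hD' : D ≤ r) (hδ : -r ≤ δ) (hδ' : δ < r) :
    potential r (D * r + δ) =
      (if 0 ≤ δ then (if D = δ then 1 else 0) else (if D = δ + 1 then 1 else 0)) +
        (if D = δ + (r + 1) then 1 else 0) + (if D = δ - r then 1 else 0) := by
  have hdvd (y : ℤ) (hy : -r - 1 ≤ y) (hy' : y ≤ r) :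
      (r + 1 : ℤ) ∣ D * r + y ↔ y - D = 0 ∨ y - D = r + 1 ∨ y - D = -(r + 1) := by
    rw [show D * r + y = (r + 1) * D + (y - D) by ring, dvd_add_right (dvd_mul_right _ _)]
    exact Int.dvd_iff_of_abs_lt_two_mul (by omega) (abs_lt.mpr ⟨by omega, by omega⟩)
  have hsign : 0 ≤ D * r + δ ↔ 0 < D ∨ (D = 0 ∧ 0 ≤ δ) := by
    rcases lt_trichotomy D 0 with h | rfl | h
    · exact ⟨fun h' => by nlinarith, by omega⟩
    · simp
    · exact ⟨fun _ => Or.inl h, fun _ => by nlinarith⟩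
  unfold potential
  rw [add_assoc]
  simp only [hdvd δ (by omega) (by omega), hdvd (δ + 1) (by omega) (by omega)]
  by_cases hs : 0 ≤ D * r + δ
  · have := hsign.mp hs
    rw [if_pos hs]
    split_ifs <;> norm_num <;> omega
  · have := mt hsign.mpr hs
    rw [if_neg hs]
    split_ifs <;> norm_num <;> omega

theorem sum_Ico_potential {s e : ℕ} {γ δ : ℤ} (he : e ≤ r + 1) (hγ : 0 ≤ γ) (hγ' : γ ≤ r)
    (hδ : -r ≤ δ) (hδ' : δ < r) :
    ∑ β ∈ Ico s e, potential r ((γ - β) * r + δ) =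
      (if 0 ≤ δ then (if (s : ℤ) ≤ γ - δ ∧ γ - δ < e then 1 else 0)
        else (if (s : ℤ) ≤ γ - (δ + 1) ∧ γ - (δ + 1) < e then 1 else 0)) +
      (if (s : ℤ) ≤ γ - (δ + (r + 1)) ∧ γ - (δ + (r + 1)) < e then 1 else 0) +
      (if (s : ℤ) ≤ γ - (δ - r) ∧ γ - (δ - r) < e then 1 else 0) := by
  rw [sum_congr rfl fun β hβ => potential_mul_add (by have := (mem_Ico.mp hβ).2; omega)
    (by omega) hδ hδ']
  simp only [sum_add_distrib, sum_ite_irrel, sum_Ico_ite_sub_eq]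

theorem sum_potential_eq_one {α : ℕ} {γ l : ℤ} (hα : α ≤ r) (hγ : 0 ≤ γ) (hγ' : γ ≤ r)
    (hl : 0 ≤ l) (hl' : l < r) :
    ∑ β ∈ Ico (α + 1) (r + 1), potential r ((γ - β) * r + l) +
      ∑ β ∈ Ico 0 α, potential r ((γ - β) * r + (l - r)) = 1 := by
  rw [sum_Ico_potential le_rfl hγ hγ' (by omega) hl',
    sum_Ico_potential (by omega) hγ hγ' (by omega) (by omega)]
  split_ifs <;> norm_num <;> omega

theorem sum_potential_eq_ite {α : ℕ} {γ j l : ℤ} (hα : α ≤ r) (hγ : 0 ≤ γ) (hγ' : γ ≤ r)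
    (hj : 0 ≤ j) (hj' : j < r) (hl : 0 ≤ l) (hl' : l < r) :
    ∑ β ∈ Ico (α + 1) (r + 1), potential r ((γ - β) * r + (l - j - 1)) +
      ∑ β ∈ Ico 0 α, potential r ((γ - β) * r + (l - j)) =
        if (α : ℤ) = γ ∧ j = l then 0 else 1 := by
  rw [sum_Ico_potential le_rfl hγ hγ' (by omega) (by omega),
    sum_Ico_potential (by omega) hγ hγ' (by omega) (by omega)]
  split_ifs <;> norm_num <;> omega

theorem coeff_of_abs_lt {δ : ℤ} (hδ : -r < δ) (hδ' : δ < r) :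
    coeff r δ = (if δ = -1 then 1 else 0) - (if δ = 1 then 1 else 0) := by
  have h₀ := potential_mul_add (r := r) (D := 0) (δ := δ) (by omega) (by omega) hδ.le hδ'
  have h₁ := potential_mul_add (r := r) (D := 0) (δ := δ - 1) (by omega) (by omega) (by omega)
    (by omega)
  rw [zero_mul, zero_add] at h₀ h₁
  rw [coeff, h₀, h₁]
  split_ifs <;> norm_num <;> omega

theorem coeff_mul_add_of_pos {m δ : ℤ} (hm : 0 < m) (hm' : m ≤ r) (hδ : -r < δ) (hδ' : δ < r) :
    coeff r (m * r + δ) = (if δ = m then 1 else 0) - (if δ = m + 1 then 1 else 0) +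
      (if δ = m - r - 1 then 1 else 0) - (if δ = m - r then 1 else 0) := by
  have h₁ := potential_mul_add (r := r) (D := m) (δ := δ - 1) (by omega) hm' (by omega) (by omega)
  rw [coeff, add_sub_assoc, h₁, potential_mul_add (by omega) hm' hδ.le hδ']
  rcases (by omega : δ = m ∨ δ = m + 1 ∨ δ = m - r - 1 ∨ δ = m - r ∨
      (δ ≠ m ∧ δ ≠ m + 1 ∧ δ ≠ m - r - 1 ∧ δ ≠ m - r)) with h | h | h | h | h <;>
    simp (disch := omega) only [if_pos, if_neg] <;> norm_num

end Coefficients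

section Matrices

variable (r : ℕ)

def index (p : Fin (r + 1) × Fin r) : ℤ := ((p.1 : ℕ) : ℤ) * r + ((p.2 : ℕ) : ℤ)

def matrix : Matrix (Fin (r + 1) × Fin r) (Fin (r + 1) × Fin r) ℚ :=
  Matrix.of fun p q => if p.1 = q.1 then 0
    else if p.1 < q.1 then (if q.2 ≤ p.2 then 1 else 0) else -(if p.2 ≤ q.2 then 1 else 0)

def inverse : Matrix (Fin (r + 1) × Fin r) (Fin (r + 1) × Fin r) ℚ :=
  Matrix.of fun p q => coeff r (index r q - index r p)

theorem inverse_apply (α β : Fin (r + 1)) (j k : Fin r) :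
    inverse r (α, j) (β, k) =
      coeff r ((((β : ℕ) : ℤ) - ((α : ℕ) : ℤ)) * r + (((k : ℕ) : ℤ) - ((j : ℕ) : ℤ))) := by
  simp only [inverse, index, Matrix.of_apply]
  ring_nf

theorem sum_matrix_mul_inverse (α β γ : Fin (r + 1)) (j l : Fin r) :
    ∑ k, matrix r (α, j) (β, k) * inverse r (β, k) (γ, l) =
      (if α < β then
        potential r ((γ - β) * r + l) - potential r ((γ - β) * r + (l - j - 1)) else 0) -
      (if β < α then
        potential r ((γ - β) * r + (l - j)) - potential r ((γ - β) * r + (l - r)) else 0) := by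
  have hx (k : Fin r) : inverse r (β, k) (γ, l) =
      coeff r ((((γ : ℕ) : ℤ) - ((β : ℕ) : ℤ)) * r + ((l : ℕ) : ℤ) - ((k : ℕ) : ℤ)) := by
    rw [inverse_apply]
    ring_nf
  simp only [matrix, Matrix.of_apply, hx]
  rcases lt_trichotomy α β with h | rfl | h
  · simp only [if_neg h.ne, if_pos h, if_neg h.not_gt, ite_mul, one_mul, zero_mul, sub_zero]
    rw [Fin.sum_ite_eq_sum_Ico (· ≤ j) (fun k => coeff r (_ - k)) (s := 0) (e := j + 1) j.isLt
      (fun k => by rw [Fin.le_def]; omega), sum_Ico_coeff r _ (by omega)]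
    push_cast
    ring_nf
  · simp
  · simp only [if_neg h.ne', if_neg h.not_gt, if_pos h, neg_mul, ite_mul, one_mul, zero_mul,
      sum_neg_distrib, zero_sub]
    rw [Fin.sum_ite_eq_sum_Ico (j ≤ ·) (fun k => coeff r (_ - k)) (s := j) (e := r) le_rfl
      (fun k => by rw [Fin.le_def]; omega), sum_Ico_coeff r _ j.isLt.le]
    ring_nf

theorem matrix_mul_inverse : matrix r * inverse r = 1 := by
  ext ⟨α, j⟩ ⟨γ, l⟩
  have hα := α.isLt
  have hγ := γ.isLt
  have hj := j.isLt
  have hl := l.isLt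
  rw [Matrix.mul_apply, Fintype.sum_prod_type]
  simp only [sum_matrix_mul_inverse, sum_sub_distrib]
  rw [Fin.sum_ite_eq_sum_Ico (α < ·) (fun β => potential r ((γ - (β : ℤ)) * r + l) -
      potential r ((γ - (β : ℤ)) * r + (l - j - 1))) (s := α + 1) le_rfl
      (fun β => by rw [Fin.lt_def]; omega),
    Fin.sum_ite_eq_sum_Ico (· < α) (fun β => potential r ((γ - (β : ℤ)) * r + (l - j)) -
      potential r ((γ - (β : ℤ)) * r + (l - r))) (s := 0) (e := α) hα.le
      (fun β => by rw [Fin.lt_def]; omega),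
    sum_sub_distrib, sum_sub_distrib, Matrix.one_apply]
  have hA := sum_potential_eq_one (r := r) (α := α) (γ := γ) (l := l) (by omega) (by omega)
    (by omega) (by omega) (by omega)
  have hB := sum_potential_eq_ite (r := r) (α := α) (γ := γ) (j := j) (l := l) (by omega)
    (by omega) (by omega) (by omega) (by omega) (by omega) (by omega)
  by_cases h : (α, j) = (γ, l)
  · rw [if_pos (by obtain ⟨rfl, rfl⟩ := Prod.mk.inj h; exact ⟨rfl, rfl⟩)] at hB
    rw [if_pos h]
    linear_combination hA - hB
  · rw [if_neg fun ⟨h₁, h₂⟩ => h (Prod.ext (Fin.ext (by exact_mod_cast h₁))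
      (Fin.ext (by exact_mod_cast h₂)))] at hB
    rw [if_neg h]
    linear_combination hA - hB

theorem inverse_apply_eq_of_index_sub_eq {p q p' q' : Fin (r + 1) × Fin r}
    (h : index r q - index r p = index r q' - index r p') :
    inverse r p q = inverse r p' q' := by
  simp only [inverse, of_apply, h]

theorem inverse_apply_swap (α β : Fin (r + 1)) (j k : Fin r) :
    inverse r (α, j) (β, k) = -inverse r (β, k) (α, j) := by
  rw [inverse_apply, inverse_apply, ← coeff_neg]
  ring_nf

variable {r} {T : Matrix (Fin r) (Fin r) ℚ}

theorem inverse_apply_self (hT : ∀ i j : Fin r, T i j = if (i : ℕ) + 1 = j then 1 else 0)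
    (α : Fin (r + 1)) (j k : Fin r) :
    inverse r (α, j) (α, k) = (Tᵀ - T) j k := by
  rw [inverse_apply, sub_self, zero_mul, zero_add, coeff_of_abs_lt (by omega) (by omega)]
  simp only [Matrix.sub_apply, transpose_apply, hT]
  split_ifs <;> norm_num <;> omega

theorem inverse_apply_of_lt (hT : ∀ i j : Fin r, T i j = if (i : ℕ) + 1 = j then 1 else 0)
    {α β : Fin (r + 1)} (h : α < β) (j k : Fin r) :
    inverse r (α, j) (β, k) =
      (T ^ ((β : ℕ) - (α : ℕ)) - T ^ ((β : ℕ) - (α : ℕ) + 1) +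
        Tᵀ ^ (r - ((β : ℕ) - (α : ℕ)) + 1) - Tᵀ ^ (r - ((β : ℕ) - (α : ℕ)))) j k := by
  have h' : (α : ℕ) < β := h
  have hβ := β.isLt
  obtain ⟨m, hm⟩ : ∃ m, m = (β : ℕ) - α := ⟨_, rfl⟩
  rw [inverse_apply, show ((β : ℕ) - (α : ℕ) : ℤ) = m by omega, ← hm,
    coeff_mul_add_of_pos (by omega) (by omega) (by omega) (by omega)]
  simp only [Matrix.sub_apply, Matrix.add_apply, ← transpose_pow, transpose_apply,
    pow_apply_of_apply_eq_ite_succ T hT]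
  split_ifs <;> norm_num <;> omega

end Matrices

end DipperDonkin

open DipperDonkin in
/-- Indices are 0-based: block entry `(α, j)` has scalar index `α·r + j` (the paper's
`(α-1)r + j`), and the paper's `β - α` is `(β:ℕ) - (α:ℕ)`. -/
theorem stmt_12_general (r : ℕ)
    (Mr Nr Tr : Matrix (Fin r) (Fin r) ℚ)
    (hMr : ∀ i j : Fin r, Mr i j = if j ≤ i then 1 else 0)
    (hNr : Nr = -Mrᵀ)
    (hTr : ∀ i j : Fin r, Tr i j = if (i : ℕ) + 1 = (j : ℕ) then 1 else 0)
    (H : Matrix (Fin (r + 1) × Fin r) (Fin (r + 1) × Fin r) ℚ)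
    (hH : ∀ (α β : Fin (r + 1)) (j k : Fin r), H (α, j) (β, k) =
      if α = β then 0 else if α < β then Mr j k else Nr j k) :
    IsUnit H.det ∧
    (∀ p q p' q' : Fin (r + 1) × Fin r,
      (((p'.1 : ℕ) : ℤ) * r + ((p'.2 : ℕ) : ℤ)) - (((p.1 : ℕ) : ℤ) * r + ((p.2 : ℕ) : ℤ)) =
        (((q'.1 : ℕ) : ℤ) * r + ((q'.2 : ℕ) : ℤ)) - (((q.1 : ℕ) : ℤ) * r + ((q.2 : ℕ) : ℤ)) →
      H⁻¹ p q = H⁻¹ p' q') ∧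
    (∀ (α : Fin (r + 1)) (j k : Fin r), H⁻¹ (α, j) (α, k) = (Trᵀ - Tr) j k) ∧
    (∀ (α β : Fin (r + 1)) (j k : Fin r), α < β →
      H⁻¹ (α, j) (β, k) =
        (Tr ^ ((β : ℕ) - (α : ℕ)) - Tr ^ ((β : ℕ) - (α : ℕ) + 1) +
          (Trᵀ) ^ (r - ((β : ℕ) - (α : ℕ)) + 1) - (Trᵀ) ^ (r - ((β : ℕ) - (α : ℕ)))) j k) ∧
    (∀ (α β : Fin (r + 1)) (j k : Fin r), β < α →
      H⁻¹ (α, j) (β, k) = - H⁻¹ (β, k) (α, j)) := by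
  have hHD : H = DipperDonkin.matrix r := by
    ext ⟨α, j⟩ ⟨β, k⟩
    simp only [hH, hNr, DipperDonkin.matrix, of_apply, Matrix.neg_apply, transpose_apply, hMr]
  have hHK : H * inverse r = 1 := hHD ▸ matrix_mul_inverse r
  have hinv : H⁻¹ = inverse r := inv_eq_right_inv hHK
  refine ⟨isUnit_det_of_right_inverse hHK, ?_, ?_, ?_, ?_⟩
  · intro p q p' q' h
    rw [hinv]
    exact inverse_apply_eq_of_index_sub_eq r (by simp only [index]; linarith)
  · intro α j k
    rw [hinv, inverse_apply_self hTr]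
  · intro α β j k h
    rw [hinv, inverse_apply_of_lt hTr h]
  · intro α β j k _
    rw [hinv, inverse_apply_swap]

/-- for `n = r+1`, `H_D` is invertible, its scalar entries are
constant along diagonals (scalar index of block entry `(α, j)` is `α·r + j`,
the 0-based version of the paper's `a = (α-1)r + j`), and its `r×r` blocks are
given explicitly in terms of `T_r`. Block indices `α, β : Fin (r+1)` are the
0-based versions of the paper's `1,…,n`, so the paper's `β - α` is `(β:ℕ) - (α:ℕ)`. -/
theorem stmt_12 (r : ℕ) (hr : 2 ≤ r)
    (Mr Nr Tr : Matrix (Fin r) (Fin r) ℚ)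
    (hMr : ∀ i j : Fin r, Mr i j = if j ≤ i then 1 else 0)
    (hNr : Nr = -Mrᵀ)
    (hTr : ∀ i j : Fin r, Tr i j = if (i : ℕ) + 1 = (j : ℕ) then 1 else 0)
    (H : Matrix (Fin (r + 1) × Fin r) (Fin (r + 1) × Fin r) ℚ)
    (hH : ∀ (α β : Fin (r + 1)) (j k : Fin r), H (α, j) (β, k) =
      if α = β then 0 else if α < β then Mr j k else Nr j k) :
    IsUnit H.det ∧
    (∀ p q p' q' : Fin (r + 1) × Fin r,
      (((p'.1 : ℕ) : ℤ) * r + ((p'.2 : ℕ) : ℤ)) - (((p.1 : ℕ) : ℤ) * r + ((p.2 : ℕ) : ℤ)) =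
        (((q'.1 : ℕ) : ℤ) * r + ((q'.2 : ℕ) : ℤ)) - (((q.1 : ℕ) : ℤ) * r + ((q.2 : ℕ) : ℤ)) →
      H⁻¹ p q = H⁻¹ p' q') ∧
    (∀ (α : Fin (r + 1)) (j k : Fin r), H⁻¹ (α, j) (α, k) = (Trᵀ - Tr) j k) ∧
    (∀ (α β : Fin (r + 1)) (j k : Fin r), α < β →
      H⁻¹ (α, j) (β, k) =
        (Tr ^ ((β : ℕ) - (α : ℕ)) - Tr ^ ((β : ℕ) - (α : ℕ) + 1) +
          (Trᵀ) ^ (r - ((β : ℕ) - (α : ℕ)) + 1) - (Trᵀ) ^ (r - ((β : ℕ) - (α : ℕ)))) j k) ∧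
    (∀ (α β : Fin (r + 1)) (j k : Fin r), β < α →
      H⁻¹ (α, j) (β, k) = - H⁻¹ (β, k) (α, j)) :=
  stmt_12_general r Mr Nr Tr hMr hNr hTr H hH
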